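/- arXiv:1407.3551 — 5 statements merged into one kernel-verified Lean document; each statement's English description precedes it below -/
import Mathlib

section
/- Let M be a finite-rank self-adjoint operator on a Hilbert space K and let F : H → K be an injective bounded operator with dense range whose adjoint F* is injective and whose range contains the range of M. Then F*MF is a finite-rank self-adjoint operator with rank(F*MF) = rank(M) and sign(F*MF) = sign(M), where sign(A) = rank(A₊) − rank(A₋). -/
/-!
Write `N = F† M F`. Since `range N ⊆ F† (range M)`, `rank N ≤ rank M`. If `T, S` are symmetric
with `T S = 0` and `T - S` has finite rank, then `range (T - S) = range T ⊕ range S`; hence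
`rank M = rank Mp + rank Mn` and `rank N = rank Np + rank Nn`. On `F⁻¹ (range Mp)`, a space of
dimension `rank Mp`, the form `⟪N x, x⟫ = ⟪Mp (F x), F x⟫` is positive definite, so `Np` is
injective there and `rank Mp ≤ rank Np`; likewise `rank Mn ≤ rank Nn`. The chain
`rank Np + rank Nn = rank N ≤ rank M = rank Mp + rank Mn ≤ rank Np + rank Nn`
forces equality throughout.
-/

open Module Submodule

namespace LinearMap

variable {𝕜 E : Type*} [RCLike 𝕜] [NormedAddCommGroup E] [InnerProductSpace 𝕜 E]
  {T S : E →ₗ[𝕜] E}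

theorem IsSymmetric.ker_sub_eq_inf_of_mul_eq_zero (hT : T.IsSymmetric) (hTS : T * S = 0) :
    ker (T - S) = ker T ⊓ ker S := by
  refine le_antisymm (fun x hx => ?_) (fun x hx => by simp_all)
  have hTx : T x = S x := sub_eq_zero.mp hx
  -- `⟪T x, T x⟫ = ⟪T x, S x⟫ = ⟪x, T (S x)⟫ = 0`
  have hTx0 : T x = 0 := by
    rw [← inner_self_eq_zero (𝕜 := 𝕜)]
    nth_rw 2 [hTx]
    rw [hT, ← Module.End.mul_apply, hTS, zero_apply, inner_zero_right]
  exact ⟨hTx0, mem_ker.mpr (hTx ▸ hTx0)⟩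

theorem IsSymmetric.disjoint_range_of_mul_eq_zero (hT : T.IsSymmetric) (hTS : T * S = 0) :
    Disjoint (range T) (range S) := by
  rw [disjoint_iff_inf_le]
  rintro _ ⟨⟨a, rfl⟩, ⟨b, hb⟩⟩
  rw [mem_bot, ← inner_self_eq_zero (𝕜 := 𝕜)]
  nth_rw 2 [← hb]
  rw [hT, ← Module.End.mul_apply, hTS, zero_apply, inner_zero_right]

theorem IsSymmetric.range_le_range_of_ker_le {N : E →ₗ[𝕜] E} (hN : N.IsSymmetric)
    (hS : S.IsSymmetric) [FiniteDimensional 𝕜 (range N)] (h : ker N ≤ ker S) :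
    range S ≤ range N :=
  calc range S ≤ (range S)ᗮᗮ := le_orthogonal_orthogonal _
    _ = (ker S)ᗮ := by rw [hS.orthogonal_range]
    _ ≤ (ker N)ᗮ := orthogonal_le h
    _ = range N := by rw [← hN.orthogonal_range, orthogonal_orthogonal]

theorem IsSymmetric.range_sub_eq_sup_of_mul_eq_zero (hT : T.IsSymmetric) (hS : S.IsSymmetric)
    (hTS : T * S = 0) [FiniteDimensional 𝕜 (range (T - S))] :
    range (T - S) = range T ⊔ range S := by
  have hker := hT.ker_sub_eq_inf_of_mul_eq_zero hTS
  refine le_antisymm ?_ (sup_le ?_ ?_)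
  · rintro _ ⟨x, rfl⟩
    exact sub_mem (mem_sup_left ⟨x, rfl⟩) (mem_sup_right ⟨x, rfl⟩)
  · exact (hT.sub hS).range_le_range_of_ker_le hT (hker ▸ inf_le_left)
  · exact (hT.sub hS).range_le_range_of_ker_le hS (hker ▸ inf_le_right)

theorem IsSymmetric.finrank_range_sub_of_mul_eq_zero (hT : T.IsSymmetric) (hS : S.IsSymmetric)
    (hTS : T * S = 0) [FiniteDimensional 𝕜 (range (T - S))] :
    finrank 𝕜 (range (T - S)) = finrank 𝕜 (range T) + finrank 𝕜 (range S) := by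
  have hsup := hT.range_sub_eq_sup_of_mul_eq_zero hS hTS
  have : FiniteDimensional 𝕜 (range T) := finiteDimensional_of_le (hsup ▸ le_sup_left)
  have : FiniteDimensional 𝕜 (range S) := finiteDimensional_of_le (hsup ▸ le_sup_right)
  rw [hsup, ← finrank_sup_add_finrank_inf_eq,
    (hT.disjoint_range_of_mul_eq_zero hTS).eq_bot, finrank_bot, add_zero]

theorem finrank_le_finrank_range_of_re_inner_sub_pos {N P : E →ₗ[𝕜] E} (hP : P.IsPositive)
    [FiniteDimensional 𝕜 (range N)] (W : Submodule 𝕜 E)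
    (hW : ∀ w ∈ W, w ≠ 0 → 0 < RCLike.re (inner 𝕜 ((N - P) w) w)) :
    finrank 𝕜 W ≤ finrank 𝕜 (range N) := by
  have hinj : Function.Injective (N ∘ₗ W.subtype) := by
    rw [← ker_eq_bot, eq_bot_iff]
    rintro ⟨w, hw⟩ hNw
    by_contra hw0
    have hpos := hW w hw (by simpa using hw0)
    rw [sub_apply, show N w = 0 from hNw, zero_sub, inner_neg_left, map_neg] at hpos
    linarith [hP.re_inner_nonneg_left w]
  calc finrank 𝕜 W = finrank 𝕜 (range (N ∘ₗ W.subtype)) := (finrank_range_of_inj hinj).symm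
    _ ≤ finrank 𝕜 (range N) := finrank_mono (range_comp_le_range _ _)

end LinearMap

theorem IsSelfAdjoint.mul_eq_zero_comm {R : Type*} [NonUnitalNonAssocSemiring R] [StarRing R]
    {a b : R} (ha : IsSelfAdjoint a) (hb : IsSelfAdjoint b) (h : a * b = 0) : b * a = 0 := by
  simpa [ha.star_eq, hb.star_eq] using congrArg star h

namespace ContinuousLinearMap

open scoped InnerProductSpace

variable {H K : Type*} [NormedAddCommGroup H] [InnerProductSpace ℂ H] [CompleteSpace H]
  [NormedAddCommGroup K] [InnerProductSpace ℂ K] [CompleteSpace K]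

theorem IsPositive.apply_eq_zero_of_re_inner_eq_zero {T : K →L[ℂ] K} (hT : T.IsPositive) {x : K}
    (hx : RCLike.re ⟪T x, x⟫_ℂ = 0) : T x = 0 := by
  have hT0 : 0 ≤ T := (nonneg_iff_isPositive T).mpr hT
  set R := CFC.sqrt T
  have hRR : R * R = T := CFC.sqrt_mul_sqrt_self T hT0
  have hinner : ⟪T x, x⟫_ℂ = ⟪R x, R x⟫_ℂ := by
    rw [← hRR]
    exact (CFC.sqrt_nonneg T).isSelfAdjoint.isSymmetric (R x) x
  have hRx : R x = 0 := by
    rw [← norm_eq_zero, ← sq_eq_zero_iff, norm_sq_eq_re_inner (𝕜 := ℂ), ← hinner, hx]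
  rw [← hRR]
  exact (congrArg R hRx).trans (map_zero R)

theorem IsPositive.re_inner_pos_of_mem_range {T : K →L[ℂ] K} (hT : T.IsPositive) {y : K}
    (hy : y ∈ LinearMap.range (T : K →ₗ[ℂ] K)) (hy0 : y ≠ 0) : 0 < RCLike.re ⟪T y, y⟫_ℂ := by
  refine (hT.re_inner_nonneg_left y).lt_of_ne fun h => hy0 ?_
  have hker : y ∈ (LinearMap.range (T : K →ₗ[ℂ] K))ᗮ := by
    rw [hT.isSymmetric.orthogonal_range]
    exact hT.apply_eq_zero_of_re_inner_eq_zero h.symm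
  simpa [Submodule.inf_orthogonal_eq_bot] using Submodule.mem_inf.mpr ⟨hy, hker⟩

theorem finrank_range_le_of_adjoint_conj_eq_sub {F : H →L[ℂ] K} (hF : Function.Injective F)
    {Tp Tn : K →L[ℂ] K} (hTp : Tp.IsPositive) (hTnTp : Tn * Tp = 0)
    (hrange : LinearMap.range (Tp : K →ₗ[ℂ] K) ≤ LinearMap.range (F : H →ₗ[ℂ] K))
    {Np Nn : H →L[ℂ] H} (hNn : Nn.IsPositive)
    [FiniteDimensional ℂ (LinearMap.range (Np : H →ₗ[ℂ] H))]
    (h : adjoint F ∘L (Tp - Tn) ∘L F = Np - Nn) :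
    finrank ℂ (LinearMap.range (Tp : K →ₗ[ℂ] K)) ≤
      finrank ℂ (LinearMap.range (Np : H →ₗ[ℂ] H)) := by
  set W := (LinearMap.range (Tp : K →ₗ[ℂ] K)).comap (F : H →ₗ[ℂ] K)
  have hW : finrank ℂ W = finrank ℂ (LinearMap.range (Tp : K →ₗ[ℂ] K)) := by
    rw [← map_comap_eq_of_le hrange]
    exact (Submodule.equivMapOfInjective _ hF W).finrank_eq
  rw [← hW]
  refine LinearMap.finrank_le_finrank_range_of_re_inner_sub_pos hNn.toLinearMap W fun w hw hw0 => ?_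
  obtain ⟨x, hx⟩ := hw
  replace hx : Tp x = F w := hx
  have hTn : Tn (F w) = 0 := by rw [← hx]; exact congrArg (· x) hTnTp
  have hinner : ⟪Np w - Nn w, w⟫_ℂ = ⟪Tp (F w), F w⟫_ℂ := by
    rw [← sub_apply, ← h, comp_apply, adjoint_inner_left, comp_apply, sub_apply, hTn, sub_zero]
  show 0 < RCLike.re ⟪Np w - Nn w, w⟫_ℂ
  rw [hinner]
  exact hTp.re_inner_pos_of_mem_range ⟨x, hx⟩ (hF.ne_iff' (map_zero F) |>.mpr hw0)

end ContinuousLinearMap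

open ContinuousLinearMap

theorem adjoint_conj_preserves_rank_and_signature_general
    {H K : Type*} [NormedAddCommGroup H] [InnerProductSpace ℂ H] [CompleteSpace H]
    [NormedAddCommGroup K] [InnerProductSpace ℂ K] [CompleteSpace K]
    (F : H →L[ℂ] K) (hFinj : Function.Injective F)
    (M Mp Mn : K →L[ℂ] K) (hM : IsSelfAdjoint M)
    (hfr : FiniteDimensional ℂ ↥(LinearMap.range (M : K →ₗ[ℂ] K)))
    (hrange : LinearMap.range (M : K →ₗ[ℂ] K) ≤ LinearMap.range (F : H →ₗ[ℂ] K))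
    (hdecomp : M = Mp - Mn) (hMp : Mp.IsPositive) (hMn : Mn.IsPositive)
    (horth : Mp * Mn = 0)
    (Np Nn : H →L[ℂ] H)
    (hdecomp' : ContinuousLinearMap.adjoint F ∘L M ∘L F = Np - Nn)
    (hNp : Np.IsPositive) (hNn : Nn.IsPositive)
    (horthN : Np * Nn = 0) :
    IsSelfAdjoint (ContinuousLinearMap.adjoint F ∘L M ∘L F) ∧
      FiniteDimensional ℂ ↥(LinearMap.range ((ContinuousLinearMap.adjoint F ∘L M ∘L F : H →L[ℂ] H) : H →ₗ[ℂ] H)) ∧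
      Module.finrank ℂ ↥(LinearMap.range ((ContinuousLinearMap.adjoint F ∘L M ∘L F : H →L[ℂ] H) : H →ₗ[ℂ] H)) =
        Module.finrank ℂ ↥(LinearMap.range (M : K →ₗ[ℂ] K)) ∧
      (Module.finrank ℂ ↥(LinearMap.range (Np : H →ₗ[ℂ] H)) : ℤ) -
          (Module.finrank ℂ ↥(LinearMap.range (Nn : H →ₗ[ℂ] H)) : ℤ) =
        (Module.finrank ℂ ↥(LinearMap.range (Mp : K →ₗ[ℂ] K)) : ℤ) -
          (Module.finrank ℂ ↥(LinearMap.range (Mn : K →ₗ[ℂ] K)) : ℤ) := by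
  have hNle : LinearMap.range ((adjoint F ∘L M ∘L F : H →L[ℂ] H) : H →ₗ[ℂ] H) ≤
      (LinearMap.range (M : K →ₗ[ℂ] K)).map (adjoint F : K →ₗ[ℂ] H) := by
    rintro _ ⟨x, rfl⟩
    exact ⟨M (F x), ⟨F x, rfl⟩, rfl⟩
  have hNfin := finiteDimensional_of_le hNle
  have hNM := (finrank_mono hNle).trans (finrank_map_le _ _)
  refine ⟨hM.adjoint_conj F, hNfin, ?_⟩
  subst hdecomp
  rw [hdecomp'] at hNfin hNM ⊢
  have hMsup := hMp.isSymmetric.range_sub_eq_sup_of_mul_eq_zero hMn.isSymmetric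
    (congrArg toLinearMap horth)
  have hNsup := hNp.isSymmetric.range_sub_eq_sup_of_mul_eq_zero hNn.isSymmetric
    (congrArg toLinearMap horthN)
  have hMsum := hMp.isSymmetric.finrank_range_sub_of_mul_eq_zero hMn.isSymmetric
    (congrArg toLinearMap horth)
  have hNsum := hNp.isSymmetric.finrank_range_sub_of_mul_eq_zero hNn.isSymmetric
    (congrArg toLinearMap horthN)
  have : FiniteDimensional ℂ (LinearMap.range (Np : H →ₗ[ℂ] H)) :=
    finiteDimensional_of_le (hNsup ▸ le_sup_left)
  have : FiniteDimensional ℂ (LinearMap.range (Nn : H →ₗ[ℂ] H)) :=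
    finiteDimensional_of_le (hNsup ▸ le_sup_right)
  have hp := finrank_range_le_of_adjoint_conj_eq_sub hFinj hMp
    (hMp.isSelfAdjoint.mul_eq_zero_comm hMn.isSelfAdjoint horth)
    ((hMsup ▸ le_sup_left).trans hrange) hNn hdecomp'
  have hn := finrank_range_le_of_adjoint_conj_eq_sub hFinj hMn horth
    ((hMsup ▸ le_sup_right).trans hrange) hNp
    (by rw [← neg_sub Mp, neg_comp, comp_neg, hdecomp', neg_sub])
  simp only [toLinearMap_sub] at hNM ⊢
  omega

/-- Let `M` be a finite-rank self-adjoint operator on a Hilbert space `K` and let `F : H → K` be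
an injective bounded operator with dense range, injective adjoint, and whose range contains the
range of `M`.  If `M = Mp - Mn` and `F* M F = Np - Nn` are the decompositions into positive and
negative parts, then `F* M F` is self-adjoint of finite rank, with the same rank as `M` and the
same signature `rank(·₊) − rank(·₋)` as `M`. -/
theorem adjoint_conj_preserves_rank_and_signature
    {H K : Type*} [NormedAddCommGroup H] [InnerProductSpace ℂ H] [CompleteSpace H]
    [NormedAddCommGroup K] [InnerProductSpace ℂ K] [CompleteSpace K]
    (F : H →L[ℂ] K) (hFinj : Function.Injective F) (hFdense : DenseRange F)
    (hFadj : Function.Injective (ContinuousLinearMap.adjoint F))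
    (M Mp Mn : K →L[ℂ] K) (hM : IsSelfAdjoint M)
    (hfr : FiniteDimensional ℂ ↥(LinearMap.range (M : K →ₗ[ℂ] K)))
    (hrange : LinearMap.range (M : K →ₗ[ℂ] K) ≤ LinearMap.range (F : H →ₗ[ℂ] K))
    (hdecomp : M = Mp - Mn) (hMp : Mp.IsPositive) (hMn : Mn.IsPositive)
    (horth : Mp * Mn = 0) (horth' : Mn * Mp = 0)
    (Np Nn : H →L[ℂ] H)
    (hdecomp' : ContinuousLinearMap.adjoint F ∘L M ∘L F = Np - Nn)
    (hNp : Np.IsPositive) (hNn : Nn.IsPositive)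
    (horthN : Np * Nn = 0) (horthN' : Nn * Np = 0) :
    IsSelfAdjoint (ContinuousLinearMap.adjoint F ∘L M ∘L F) ∧
      FiniteDimensional ℂ ↥(LinearMap.range ((ContinuousLinearMap.adjoint F ∘L M ∘L F : H →L[ℂ] H) : H →ₗ[ℂ] H)) ∧
      Module.finrank ℂ ↥(LinearMap.range ((ContinuousLinearMap.adjoint F ∘L M ∘L F : H →L[ℂ] H) : H →ₗ[ℂ] H)) =
        Module.finrank ℂ ↥(LinearMap.range (M : K →ₗ[ℂ] K)) ∧
      (Module.finrank ℂ ↥(LinearMap.range (Np : H →ₗ[ℂ] H)) : ℤ) -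
          (Module.finrank ℂ ↥(LinearMap.range (Nn : H →ₗ[ℂ] H)) : ℤ) =
        (Module.finrank ℂ ↥(LinearMap.range (Mp : K →ₗ[ℂ] K)) : ℤ) -
          (Module.finrank ℂ ↥(LinearMap.range (Mn : K →ₗ[ℂ] K)) : ℤ) :=
  adjoint_conj_preserves_rank_and_signature_general F hFinj M Mp Mn hM hfr hrange hdecomp hMp hMn
    horth Np Nn hdecomp' hNp hNn horthN
end

section
/- Let A be an element of a unital Banach algebra, let r₀ be a scalar, and suppose u satisfies (1 + (r₀ − r)A)u = 0 for some scalar r. If s is any scalar such that 1 + (s − r)A is invertible and A(s) := (1 + (s−r)A)⁻¹A, then (1 + (r₀ − s)A(s))u = 0. More generally, for every positive integer k, (1 + (r₀−r)A)^k u = 0 implies (1 + (r₀−s)A(s))^k u = 0. -/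
/-- Let `A` be a bounded operator, `r₀` a scalar, and suppose `(1 + (r₀ − r) A)ᵏ u = 0`.
If `s` is any scalar such that `1 + (s − r) A` is invertible and
`A(s) := (1 + (s − r) A)⁻¹ A`, then `(1 + (r₀ − s) A(s))ᵏ u = 0`; i.e. the resonance equation
of order `k` does not depend on the parameter `s`. -/
theorem resonance_equation_indep_of_parameter
    {E : Type*} [NormedAddCommGroup E] [NormedSpace ℂ E]
    (A : E →L[ℂ] E) (u : E) (r₀ r s : ℂ) (h : IsUnit (1 + (s - r) • A))
    (k : ℕ) (hk : 0 < k) (hu : ((1 + (r₀ - r) • A) ^ k) u = 0) :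
    ((1 + (r₀ - s) • (Ring.inverse (1 + (s - r) • A) * A)) ^ k) u = 0 := by
  set B : E →L[ℂ] E := 1 + (s - r) • A with hB
  set C : E →L[ℂ] E := 1 + (r₀ - r) • A with hC
  have hAA : Commute ((s - r) • A) ((r₀ - r) • A) :=
    ((Commute.refl A).smul_left _).smul_right _
  have hBC : Commute B C :=
    (Commute.one_left C).add_left ((Commute.one_right _).add_right hAA)
  have hinv : Commute (Ring.inverse B) C := by
    rw [← h.unit_spec, Ring.inverse_unit]
    exact (hBC.symm.units_inv_right).symm
  have hC' : C = B + (r₀ - s) • A := by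
    rw [hB, hC, add_assoc, ← add_smul]
    congr 1
    ring
  have key : 1 + (r₀ - s) • (Ring.inverse B * A) = Ring.inverse B * C := by
    rw [hC', mul_add, Ring.inverse_mul_cancel _ h, mul_smul_comm]
  rw [key, hinv.mul_pow, ContinuousLinearMap.mul_apply, hu, map_zero]
end

section
/- Let H be a self-adjoint operator on a Hilbert space, V a finite-rank self-adjoint operator, and z a non-real complex number. Then the operator R_z(H)V = (H−z)⁻¹V has no nonzero real eigenvalues, and (R_z(H)V)²f = 0 implies R_z(H)Vf = 0; i.e. R_z(H)V belongs to the class R. -/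
/-!
With `R = (H - z)⁻¹` and `w = R u`, one has `⟪u, R u⟫ = ⟪H w, w⟫ - z̄ ‖w‖²`, so
`Im ⟪u, R u⟫ = Im z · ‖R u‖²` because `⟪H w, w⟫` is real. Hence `R u = 0` as soon as
`⟪u, R u⟫` is real. Both claims reduce to this with `u = V f`: if `R V f = μ f` with `μ` real,
then `⟪V f, R V f⟫ = μ ⟪V f, f⟫` is real; if `(R V)² f = 0`, then `V R V f = 0` by injectivity
of `R`, so `⟪V f, R V f⟫ = ⟪f, V R V f⟫ = 0`.
-/

lemma ContinuousLinearMap.injective_ring_inverse {R M : Type*} [Semiring R] [TopologicalSpace M]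
    [AddCommMonoid M] [Module R M] {T : M →L[R] M} (hT : IsUnit T) :
    Function.Injective ⇑(Ring.inverse T) :=
  Function.LeftInverse.injective (g := T) fun x => by
    simpa using congr($(Ring.mul_inverse_cancel T hT) x)

section

variable {E : Type*} [NormedAddCommGroup E] [InnerProductSpace ℂ E]

lemma IsSelfAdjoint.isUnit_sub_smul_one [CompleteSpace E] {H : E →L[ℂ] E}
    (hH : IsSelfAdjoint H) {z : ℂ} (hz : z.im ≠ 0) : IsUnit (H - z • 1) := by
  have h : IsUnit (algebraMap ℂ (E →L[ℂ] E) z - H) :=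
    spectrum.notMem_iff.mp fun hmem => hz (hH.im_eq_zero_of_mem_spectrum hmem)
  simpa [Algebra.algebraMap_eq_smul_one, neg_sub] using h.neg

lemma IsSelfAdjoint.im_inner_inverse_sub_smul_one_apply [CompleteSpace E] {H : E →L[ℂ] E}
    (hH : IsSelfAdjoint H) {z : ℂ} (hu : IsUnit (H - z • 1)) (u : E) :
    (inner ℂ u (Ring.inverse (H - z • 1) u)).im
      = z.im * ‖Ring.inverse (H - z • 1) u‖ ^ 2 := by
  set w := Ring.inverse (H - z • 1) u
  have hu_eq : u = H w - z • w := by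
    simpa [w] using congr($(Ring.mul_inverse_cancel _ hu) u).symm
  rw [hu_eq, inner_sub_left, inner_smul_left, inner_self_eq_norm_sq_to_K]
  simpa [← Complex.ofReal_pow] using hH.isSymmetric.im_inner_apply_self w

lemma IsSelfAdjoint.inverse_sub_smul_one_apply_eq_zero [CompleteSpace E] {H : E →L[ℂ] E}
    (hH : IsSelfAdjoint H) {z : ℂ} (hz : z.im ≠ 0) {u : E}
    (h : (inner ℂ u (Ring.inverse (H - z • 1) u)).im = 0) :
    Ring.inverse (H - z • 1) u = 0 := by
  rw [hH.im_inner_inverse_sub_smul_one_apply (hH.isUnit_sub_smul_one hz)] at h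
  simpa [hz] using h

end

theorem resolvent_mul_selfAdjoint_memR_general
    {E : Type*} [NormedAddCommGroup E] [InnerProductSpace ℂ E] [CompleteSpace E]
    (H V : E →L[ℂ] E) (hH : IsSelfAdjoint H) (hV : IsSelfAdjoint V)
    (z : ℂ) (hz : z.im ≠ 0) :
    (∀ μ : ℂ, μ.im = 0 → μ ≠ 0 →
        ¬Module.End.HasEigenvalue
          ((Ring.inverse (H - z • 1) * V : E →L[ℂ] E) : E →ₗ[ℂ] E) μ) ∧
      ∀ f : E, (Ring.inverse (H - z • 1) * V) ((Ring.inverse (H - z • 1) * V) f) = 0 →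
        (Ring.inverse (H - z • 1) * V) f = 0 := by
  set R := Ring.inverse (H - z • 1)
  have hVsymm := hV.isSymmetric
  refine ⟨fun μ hμ hμ0 heig => ?_, fun f hf => ?_⟩
  · obtain ⟨f, hf⟩ := heig.exists_hasEigenvector
    have hRVf : R (V f) = μ • f := hf.apply_eq_smul
    have hreal : (inner ℂ (V f) (R (V f))).im = 0 := by
      simpa [hRVf, inner_smul_right, Complex.mul_im, hμ] using
        Or.inr (hVsymm.im_inner_apply_self f)
    have hμf : μ • f = 0 := hRVf ▸ hH.inverse_sub_smul_one_apply_eq_zero hz hreal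
    exact hf.2 ((smul_eq_zero.mp hμf).resolve_left hμ0)
  · have hVRVf : V (R (V f)) = 0 :=
      ContinuousLinearMap.injective_ring_inverse (hH.isUnit_sub_smul_one hz) (by simpa using hf)
    have hzero : inner ℂ (V f) (R (V f)) = 0 := by
      simpa [hVRVf] using hVsymm f (R (V f))
    simpa using hH.inverse_sub_smul_one_apply_eq_zero hz (u := V f)
      ((congrArg Complex.im hzero).trans Complex.zero_im)

/-- Let `H` be a self-adjoint operator on a Hilbert space, `V` a finite-rank self-adjoint
operator, and `z` a non-real number.  Then `R_z(H) V = (H − z)⁻¹ V` has no nonzero real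
eigenvalues, and `(R_z(H) V)² f = 0` implies `R_z(H) V f = 0`; i.e. `R_z(H) V` belongs to the
class `R`. -/
theorem resolvent_mul_selfAdjoint_memR
    {E : Type*} [NormedAddCommGroup E] [InnerProductSpace ℂ E] [CompleteSpace E]
    (H V : E →L[ℂ] E) (hH : IsSelfAdjoint H) (hV : IsSelfAdjoint V)
    (hVfr : FiniteDimensional ℂ ↥(LinearMap.range (V : E →ₗ[ℂ] E)))
    (z : ℂ) (hz : z.im ≠ 0) :
    (∀ μ : ℂ, μ.im = 0 → μ ≠ 0 →
        ¬Module.End.HasEigenvalue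
          ((Ring.inverse (H - z • 1) * V : E →L[ℂ] E) : E →ₗ[ℂ] E) μ) ∧
      ∀ f : E, (Ring.inverse (H - z • 1) * V) ((Ring.inverse (H - z • 1) * V) f) = 0 →
        (Ring.inverse (H - z • 1) * V) f = 0 :=
  resolvent_mul_selfAdjoint_memR_general H V hH hV z hz
end

section
/- Let T be a bounded operator on a Hilbert space with Im T := (T − T*)/(2i) ≥ 0, and let J be a bounded self-adjoint operator such that 1 + TJ is invertible. Then the operator S = 1 − 2i √(Im T) · J (1 + TJ)⁻¹ · √(Im T) is unitary. -/
set_option maxHeartbeats 1000000 in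
/-- Let `T` be a bounded operator on a Hilbert space with `Im T := (T − T*)/(2i) ≥ 0`, with
positive square root `Q = √(Im T)`, and let `J` be a bounded self-adjoint operator such that
`1 + T J` is invertible.  Then `S = 1 − 2i √(Im T) · J (1 + T J)⁻¹ · √(Im T)` is unitary. -/
theorem modified_scattering_matrix_unitary
    {K : Type*} [NormedAddCommGroup K] [InnerProductSpace ℂ K] [CompleteSpace K]
    (T J Q : K →L[ℂ] K) (hJ : IsSelfAdjoint J) (hQ : Q.IsPositive)
    (hQsq : Q * Q = (2 * Complex.I)⁻¹ • (T - ContinuousLinearMap.adjoint T))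
    (hU : IsUnit (1 + T * J)) :
    (1 - (2 * Complex.I) • (Q * J * Ring.inverse (1 + T * J) * Q)) ∈
      unitary (K →L[ℂ] K) := by
  rw [← ContinuousLinearMap.star_eq_adjoint] at hQsq
  have hQ' : star Q = Q := hQ.isSelfAdjoint
  have hJ' : star J = J := hJ
  set c : ℂ := 2 * Complex.I with hc
  set A : K →L[ℂ] K := Ring.inverse (1 + T * J) with hA
  have h1 : (1 + T * J) * A = 1 := Ring.mul_inverse_cancel _ hU
  have h2 : A * (1 + T * J) = 1 := Ring.inverse_mul_cancel _ hU
  clear_value A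
  have h3 : (1 + J * star T) * star A = 1 := by
    have := congrArg star h2
    simpa [star_mul, hJ'] using this
  have h4 : star A * (1 + J * star T) = 1 := by
    have := congrArg star h1
    simpa [star_mul, hJ'] using this
  set A' : K →L[ℂ] K := 1 - star T * star A * J with hA'
  have h5 : (1 + star T * J) * A' = 1 := by
    have e : (1 + star T * J) * A' =
        1 + star T * ((1 - (1 + J * star T) * star A) * J) := by
      rw [hA']; noncomm_ring
    rw [e, h3]; simp
  have h6 : A' * (1 + star T * J) = 1 := by
    have e : A' * (1 + star T * J) =
        1 + star T * ((1 - star A * (1 + J * star T)) * J) := by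
      rw [hA']; noncomm_ring
    rw [e, h4]; simp
  clear_value A'
  -- star A * J = J * A'
  have keystar : star A * J = J * A' := by
    have : J * A' = star A * J :=
      calc J * A' = (star A * (1 + J * star T)) * (J * A') := by rw [h4, one_mul]
        _ = star A * (J * ((1 + star T * J) * A')) := by noncomm_ring
        _ = star A * J := by rw [h5, mul_one]
    exact this.symm
  set X : K →L[ℂ] K := Q * J * A * Q with hX
  set Y : K →L[ℂ] K := Q * J * A' * Q with hY
  set M : K →L[ℂ] K := Q * J * (A' * ((T - star T) * J) * A) * Q with hM
  set M' : K →L[ℂ] K := Q * J * (A * ((T - star T) * J) * A') * Q with hM'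
  have key1 : Y - X = M := by
    have e : A' * ((T - star T) * J) * A
        = A' * ((1 + T * J) * A) - A' * (1 + star T * J) * A := by noncomm_ring
    rw [hM, e, h1, h6, mul_one, one_mul]
    rw [hY, hX]; noncomm_ring
  have key2 : Y - X = M' := by
    have e : A * ((T - star T) * J) * A'
        = A * (1 + T * J) * A' - A * ((1 + star T * J) * A') := by noncomm_ring
    rw [hM', e, h2, h5, mul_one, one_mul]
    rw [hY, hX]; noncomm_ring
  have hQQ : Q * Q = c⁻¹ • (T - star T) := hQsq
  have hYX : Y * X = c⁻¹ • M := by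
    have e : Y * X = Q * J * A' * (Q * Q) * (J * A * Q) := by
      rw [hY, hX]; noncomm_ring
    rw [e, hQQ, hM]
    simp only [mul_smul_comm, smul_mul_assoc]
    exact congrArg (c⁻¹ • ·) (by noncomm_ring)
  have hXY : X * Y = c⁻¹ • M' := by
    have e : X * Y = Q * J * A * (Q * Q) * (J * A' * Q) := by
      rw [hX, hY]; noncomm_ring
    rw [e, hQQ, hM']
    simp only [mul_smul_comm, smul_mul_assoc]
    exact congrArg (c⁻¹ • ·) (by noncomm_ring)
  have hsc : star c = -c := by
    rw [hc]
    simp only [Complex.star_def, map_mul, Complex.conj_I, Complex.conj_ofNat]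
    ring
  have hstarS : star (1 - c • X) = 1 + c • Y := by
    have hx : star X = Y := by
      rw [hX, hY]
      simp only [star_mul, hQ', hJ']
      calc Q * (star A * (J * Q)) = Q * ((star A * J) * Q) := by noncomm_ring
        _ = Q * (J * A' * Q) := by rw [keystar]
        _ = Q * J * A' * Q := by noncomm_ring
    rw [star_sub, star_one, star_smul, hx, hsc, neg_smul, sub_neg_eq_add]
  have hcc : c ≠ 0 := by
    rw [hc]
    simp [Complex.I_ne_zero]
  clear_value X Y M M' c
  have hcoef : c * c * c⁻¹ = c := by field_simp
  constructor
  · rw [hstarS]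
    have e : (1 + c • Y) * (1 - c • X)
        = 1 - c • X + c • Y - (c * c) • (Y * X) := by
      rw [add_mul, mul_sub, mul_sub, smul_mul_smul_comm]
      simp only [one_mul, mul_one]
      abel
    rw [e, hYX, smul_smul, hcoef, ← key1]
    module
  · rw [hstarS]
    have e : (1 - c • X) * (1 + c • Y)
        = 1 - c • X + c • Y - (c * c) • (X * Y) := by
      rw [sub_mul, mul_add, mul_add, smul_mul_smul_comm]
      simp only [one_mul, mul_one]
      abel
    rw [e, hXY, smul_smul, hcoef, ← key2]
    module
end

section
/- Let P and Q be idempotent operators of equal finite rank N on a complex Hilbert space satisfying (P − Q)P(P − Q) = 0. Then Tr((QP)^k) = N for every k ≥ 1, and consequently every nonzero eigenvalue of QP equals 1 and the algebraic multiplicity of the eigenvalue 1 of QP is exactly N. -/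
open Matrix Polynomial

private lemma trace_idem_aux {n : ℕ} (M : Matrix (Fin n) (Fin n) ℂ) (hM : M * M = M) :
    M.trace = (M.rank : ℂ) := by
  have hf : M.mulVecLin ∘ₗ M.mulVecLin = M.mulVecLin := by
    rw [← Matrix.mulVecLin_mul, hM]
  have hproj : LinearMap.IsProj (LinearMap.range M.mulVecLin) M.mulVecLin := by
    constructor
    · intro x; exact LinearMap.mem_range_self _ x
    · rintro x ⟨y, rfl⟩
      exact LinearMap.congr_fun hf y
  have ht := hproj.trace
  rw [Matrix.rank, ← ht, LinearMap.trace_eq_matrix_trace ℂ (Pi.basisFun ℂ (Fin n)),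
    LinearMap.toMatrix_eq_toMatrix', ← Matrix.toLin'_apply', LinearMap.toMatrix'_toLin']

private lemma sum_eq_count_one_aux (s : Multiset ℂ) (hs : ∀ z ∈ s, z = 0 ∨ z = 1) :
    s.sum = (s.count 1 : ℂ) := by
  induction s using Multiset.induction_on with
  | empty => simp
  | cons a t ih =>
    have ha := hs a (Multiset.mem_cons_self a t)
    have ht := ih fun z hz => hs z (Multiset.mem_cons_of_mem hz)
    rcases ha with rfl | rfl
    · rw [Multiset.sum_cons, Multiset.count_cons_of_ne (by norm_num), ht, zero_add]
    · rw [Multiset.sum_cons, Multiset.count_cons_self, ht]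
      push_cast
      ring

/-- Let `P` and `Q` be idempotent matrices of equal rank `N` with `(P − Q) P (P − Q) = 0`.
Then `Tr ((QP)ᵏ) = N` for every `k ≥ 1`; consequently every nonzero eigenvalue of `QP` equals
`1`, and the algebraic multiplicity of the eigenvalue `1` of `QP` is exactly `N`. -/
theorem trace_pow_idempotent_product_eq_rank
    {n N : ℕ} (P Q : Matrix (Fin n) (Fin n) ℂ)
    (hP : P * P = P) (hQ : Q * Q = Q) (hrP : P.rank = N) (hrQ : Q.rank = N)
    (h : (P - Q) * P * (P - Q) = 0) :
    (∀ k : ℕ, 1 ≤ k → ((Q * P) ^ k).trace = (N : ℂ)) ∧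
      (∀ z ∈ (Q * P).charpoly.roots, z ≠ 0 → z = 1) ∧
      (Q * P).charpoly.roots.count 1 = N := by
  -- algebraic identities
  have h0 := h
  simp only [sub_mul, mul_sub, hP] at h0
  rw [mul_assoc Q P P, hP] at h0
  have key : Q * P * Q = Q * P + P * Q - P := by
    have h2 : Q * P * Q - (Q * P + P * Q - P) = 0 := by
      rw [← h0]; abel
    exact sub_eq_zero.mp h2
  have sq : (Q * P) * (Q * P) = Q * P + P * Q * P - P := by
    rw [← mul_assoc, key, sub_mul, add_mul, hP, mul_assoc Q P P, hP]
  have e1 : (Q * P) * (P * Q * P) = (Q * P) * (Q * P) := by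
    calc (Q * P) * (P * Q * P) = Q * (P * P) * Q * P := by
          simp only [mul_assoc]
      _ = (Q * P * Q) * P := by rw [hP, mul_assoc]
      _ = (Q * P + P * Q - P) * P := by rw [key]
      _ = Q * (P * P) + P * Q * P - P * P := by simp only [add_mul, sub_mul, mul_assoc]
      _ = Q * P + P * Q * P - P := by rw [hP]
      _ = (Q * P) * (Q * P) := sq.symm
  have cube : (Q * P) * ((Q * P) * (Q * P)) =
      (Q * P) * (Q * P) + (Q * P) * (Q * P) - (Q * P) := by
    calc (Q * P) * ((Q * P) * (Q * P)) = (Q * P) * (Q * P + P * Q * P - P) := by rw [sq]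
      _ = (Q * P) * (Q * P) + (Q * P) * (P * Q * P) - (Q * P) * P := by
          simp only [mul_add, mul_sub]
      _ = (Q * P) * (Q * P) + (Q * P) * (Q * P) - (Q * P) := by
          rw [e1, mul_assoc Q P P, hP]
  have cube3 : (Q * P) ^ 3 = (Q * P) ^ 2 + (Q * P) ^ 2 - (Q * P) := by
    calc (Q * P) ^ 3 = (Q * P) * ((Q * P) * (Q * P)) := by
          rw [pow_succ, pow_two, mul_assoc]
      _ = (Q * P) * (Q * P) + (Q * P) * (Q * P) - (Q * P) := cube
      _ = (Q * P) ^ 2 + (Q * P) ^ 2 - (Q * P) := by rw [pow_two]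
  -- traces
  have trP : P.trace = (N : ℂ) := by rw [trace_idem_aux P hP, hrP]
  have tQPQ : (Q * P * Q).trace = (Q * P).trace := by
    rw [trace_mul_comm, ← mul_assoc, hQ]
  have tPQ : (P * Q).trace = (Q * P).trace := trace_mul_comm P Q
  have trQP : (Q * P).trace = (N : ℂ) := by
    have e := congrArg Matrix.trace key
    rw [trace_sub, trace_add, tQPQ, tPQ, trP] at e
    linear_combination -e
  have tPQP : (P * Q * P).trace = (N : ℂ) := by
    rw [trace_mul_comm, ← mul_assoc, hP, tPQ, trQP]
  have tsq : ((Q * P) * (Q * P)).trace = (N : ℂ) := by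
    rw [sq, trace_sub, trace_add, trQP, tPQP, trP]
    ring
  have rec3 : ∀ m : ℕ, (Q * P) ^ (m + 3)
      = (Q * P) ^ (m + 2) + (Q * P) ^ (m + 2) - (Q * P) ^ (m + 1) := by
    intro m
    rw [pow_add, cube3, mul_sub, mul_add, ← pow_add, ← pow_succ]
  have T : ∀ m : ℕ, (((Q * P) ^ (m + 1)).trace = (N : ℂ)) ∧
      (((Q * P) ^ (m + 2)).trace = (N : ℂ)) := by
    intro m
    induction m with
    | zero => exact ⟨by simpa [pow_one] using trQP, by rw [pow_two]; exact tsq⟩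
    | succ k ih =>
      refine ⟨ih.2, ?_⟩
      have hk : k + 1 + 2 = k + 3 := by omega
      rw [hk, rec3 k, trace_sub, trace_add, ih.1, ih.2]
      ring
  have part1 : ∀ k : ℕ, 1 ≤ k → ((Q * P) ^ k).trace = (N : ℂ) := by
    intro k hk
    obtain ⟨m, rfl⟩ := Nat.exists_eq_add_of_le hk
    simpa [add_comm] using (T m).1
  -- every root z of charpoly satisfies z (z-1)^2 = 0
  have hann : ∀ z ∈ (Q * P).charpoly.roots, z * (z - 1) ^ 2 = 0 := by
    intro z hz
    have hz' : (Q * P).charpoly.IsRoot z := (Polynomial.mem_roots'.mp hz).2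
    have hdet : (z • (1 : Matrix (Fin n) (Fin n) ℂ) - Q * P).det = 0 := by
      have hmap : (charmatrix (Q * P)).map (Polynomial.evalRingHom z)
          = z • (1 : Matrix (Fin n) (Fin n) ℂ) - Q * P := by
        ext i j
        by_cases hij : i = j
        · subst hij
          simp [charmatrix_apply_eq, Matrix.one_apply]
        · simp [charmatrix_apply_ne _ _ _ hij, Matrix.one_apply, hij]
      have := hz'
      rw [Matrix.charpoly, Polynomial.IsRoot, ← Polynomial.coe_evalRingHom,
        RingHom.map_det, RingHom.mapMatrix_apply] at this
      rwa [hmap] at this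
    obtain ⟨v, hv0, hv⟩ := (Matrix.exists_mulVec_eq_zero_iff).mpr hdet
    have hAv : (Q * P) *ᵥ v = z • v := by
      rw [sub_mulVec, smul_mulVec, one_mulVec, sub_eq_zero] at hv
      exact hv.symm
    have h2v : ((Q * P) * (Q * P)) *ᵥ v = (z * z) • v := by
      rw [← Matrix.mulVec_mulVec, hAv, Matrix.mulVec_smul, hAv, smul_smul]
    have h3v : ((Q * P) * ((Q * P) * (Q * P))) *ᵥ v = (z * (z * z)) • v := by
      rw [← Matrix.mulVec_mulVec, h2v, Matrix.mulVec_smul, hAv, smul_smul, mul_assoc]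
    have := congrArg (fun M => M *ᵥ v) cube
    simp only [h3v, Matrix.add_mulVec, Matrix.sub_mulVec, h2v, hAv] at this
    have hscal : (z * (z * z) - (z * z + z * z - z)) • v = 0 := by
      rw [sub_smul, this, sub_smul, add_smul]
      abel
    have hz0 : z * (z * z) - (z * z + z * z - z) = 0 := by
      rcases smul_eq_zero.mp hscal with h' | h'
      · exact h'
      · exact absurd h' hv0
    linear_combination hz0
  have part2 : ∀ z ∈ (Q * P).charpoly.roots, z ≠ 0 → z = 1 := by
    intro z hz hzne
    rcases mul_eq_zero.mp (hann z hz) with h' | h'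
    · exact absurd h' hzne
    · exact sub_eq_zero.mp (pow_eq_zero_iff (n := 2) (by norm_num) |>.mp h')
  have roots01 : ∀ z ∈ (Q * P).charpoly.roots, z = 0 ∨ z = 1 := by
    intro z hz
    rcases mul_eq_zero.mp (hann z hz) with h' | h'
    · exact Or.inl h'
    · exact Or.inr (by
        have := pow_eq_zero_iff (n := 2) (by norm_num) |>.mp h'
        have := sub_eq_zero.mp this
        exact this)
  have part3 : (Q * P).charpoly.roots.count 1 = N := by
    have hsum : (Q * P).charpoly.roots.sum = ((Q * P).charpoly.roots.count 1 : ℂ) :=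
      sum_eq_count_one_aux _ roots01
    have := Matrix.trace_eq_sum_roots_charpoly (Q * P)
    rw [trQP, hsum] at this
    exact_mod_cast this.symm
  exact ⟨part1, part2, part3⟩
end
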